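/- Let W be a finite set of size L, η : W → {0,1}, and m = ∑_{a∈W} η(a). Then for any n ≤ L: ∑_{P ⊆ W, |P| = L-n} ∏_{a∈W} η^P(a) = ∑_{ℓ=0}^{L-n} (-1)^ℓ · choose (n+ℓ) ℓ · choose m (n+ℓ), where choose m k = 0 if k > m. (Inclusion–exclusion expansion of the 'exactly n particles' indicator into pure monomials.) -/

import Mathlib

/-!
For `η` with values in `{0, 1}`, the flipped monomial `∏ a ∈ W, η^P(a)` is the indicator of
`P = {a ∈ W | η a = 0}`, a set of size `L - m`; so the left-hand side is `1` if `m = n` and `0`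
otherwise. On the right, `(n + ℓ).choose ℓ * m.choose (n + ℓ) = m.choose n * (m - n).choose ℓ`,
and the alternating sum of `(m - n).choose ℓ` over `ℓ` vanishes unless `m = n`.
-/

open Finset

theorem Finset.forall_mem_iff_iff_eq_filter {α : Type*} {W P : Finset α} (hP : P ⊆ W)
    (p : α → Prop) [DecidablePred p] : (∀ a ∈ W, (a ∈ P ↔ p a)) ↔ P = W.filter p := by
  constructor
  · intro h
    ext a
    rw [mem_filter]
    exact ⟨fun ha => ⟨hP ha, (h a (hP ha)).1 ha⟩, fun ⟨ha, hpa⟩ => (h a ha).2 hpa⟩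
  · rintro rfl a ha
    simp [ha]

section FlippedMonomial

variable {α : Type*} {W : Finset α} {η : α → ℕ}

theorem prod_flip_eq_boole [DecidableEq α] (hη : ∀ a ∈ W, η a ≤ 1) (P : Finset α) :
    ∏ a ∈ W, (if a ∈ P then 1 - η a else η a) =
      if ∀ a ∈ W, (a ∈ P ↔ η a = 0) then 1 else 0 := by
  rw [← prod_boole]
  refine prod_congr rfl fun a ha => ?_
  rcases Nat.le_one_iff_eq_zero_or_eq_one.mp (hη a ha) with h | h <;>
    by_cases haP : a ∈ P <;> simp [h, haP]

theorem sum_powersetCard_prod_flip [DecidableEq α] (hη : ∀ a ∈ W, η a ≤ 1) (k : ℕ) :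
    ∑ P ∈ W.powersetCard k, ∏ a ∈ W, (if a ∈ P then 1 - η a else η a) =
      if #(W.filter (η · = 0)) = k then 1 else 0 := by
  have hindicator : ∀ P ∈ W.powersetCard k,
      ∏ a ∈ W, (if a ∈ P then 1 - η a else η a) = if P = W.filter (η · = 0) then 1 else 0 :=
    fun P hP => by
      rw [prod_flip_eq_boole hη]
      exact if_congr (forall_mem_iff_iff_eq_filter (mem_powersetCard.mp hP).1 _) rfl rfl
  rw [sum_congr rfl hindicator, sum_ite_eq']
  exact if_congr (by simp [mem_powersetCard]) rfl rfl

theorem sum_add_card_filter_eq_zero (hη : ∀ a ∈ W, η a ≤ 1) :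
    ∑ a ∈ W, η a + #(W.filter (η · = 0)) = #W := by
  rw [card_filter, ← sum_add_distrib, card_eq_sum_ones]
  refine sum_congr rfl fun a ha => ?_
  rcases Nat.le_one_iff_eq_zero_or_eq_one.mp (hη a ha) with h | h <;> simp [h]

end FlippedMonomial

theorem Int.alternating_sum_range_choose_of_le {k N : ℕ} (hk : k ≤ N) :
    ∑ ℓ ∈ Finset.range (N + 1), ((-1) ^ ℓ * k.choose ℓ : ℤ) = if k = 0 then 1 else 0 := by
  rw [← Int.alternating_sum_range_choose]
  refine (sum_subset (range_subset_range.mpr (by omega)) fun ℓ _ hℓ => ?_).symm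
  rw [Nat.choose_eq_zero_of_lt (by simpa using hℓ)]
  simp

theorem Nat.add_choose_mul_choose_add (m n ℓ : ℕ) :
    (n + ℓ).choose ℓ * m.choose (n + ℓ) = m.choose n * (m - n).choose ℓ := by
  rw [← Nat.choose_symm_add, mul_comm, Nat.choose_mul (Nat.le_add_right n ℓ),
    Nat.add_sub_cancel_left]

theorem Int.alternating_sum_add_choose_mul_choose_add {m n N : ℕ} (hm : m ≤ n + N) :
    ∑ ℓ ∈ Finset.range (N + 1), (-1 : ℤ) ^ ℓ * (n + ℓ).choose ℓ * m.choose (n + ℓ) =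
      if m = n then 1 else 0 := by
  have hfactor : ∀ ℓ ∈ Finset.range (N + 1), (-1 : ℤ) ^ ℓ * (n + ℓ).choose ℓ * m.choose (n + ℓ) =
      m.choose n * ((-1) ^ ℓ * (m - n).choose ℓ) := fun ℓ _ => by
    rw [mul_assoc, ← Nat.cast_mul, Nat.add_choose_mul_choose_add, Nat.cast_mul]
    ring
  rw [sum_congr rfl hfactor, ← mul_sum, Int.alternating_sum_range_choose_of_le (by omega)]
  rcases lt_or_ge m n with hlt | hle
  · simp [Nat.choose_eq_zero_of_lt hlt, hlt.ne]
  · by_cases h : m = n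
    · simp [h]
    · simp [h, show m - n ≠ 0 by omega]

theorem flipped_monomial_inclusion_exclusion {α : Type*} [DecidableEq α]
    (W : Finset α) (L n : ℕ) (hW : W.card = L) (hn : n ≤ L)
    (η : α → ℕ) (hη : ∀ a ∈ W, η a ≤ 1) :
    ((∑ P ∈ W.powersetCard (L - n),
        ∏ a ∈ W, (if a ∈ P then 1 - η a else η a) : ℕ) : ℤ) =
      ∑ ℓ ∈ Finset.range (L - n + 1),
        (-1 : ℤ) ^ ℓ * ((n + ℓ).choose ℓ) * ((∑ a ∈ W, η a).choose (n + ℓ)) := by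
  have hcard := sum_add_card_filter_eq_zero hη
  have hiff : #(W.filter (η · = 0)) = L - n ↔ ∑ a ∈ W, η a = n := by omega
  rw [sum_powersetCard_prod_flip hη, if_congr hiff rfl rfl,
    Int.alternating_sum_add_choose_mul_choose_add (by omega), Nat.cast_ite, Nat.cast_one,
    Nat.cast_zero]
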